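/- Let H be an n-vertex C4-free Halin graph with characteristic tree T. If every longest path in T has length exactly 5, then 3 divides n − 2 and e(H) = 5(n−2)/3 + 1. -/

import Mathlib

open SimpleGraph

/-- Degree of a vertex as the `ncard` of its neighbour set. -/
noncomputable def ncDeg {V : Type*} (G : SimpleGraph V) (v : V) : ℕ :=
  (G.neighborSet v).ncard

/-- A leaf is a vertex of degree one. -/
def IsLeaf {V : Type*} (G : SimpleGraph V) (v : V) : Prop :=
  ncDeg G v = 1

/-- A Halin graph, presented by its characteristic tree `T` and outer cycle `C`.
The underlying graph is `T ⊔ C`.  The outer cycle is a `2`-regular connected graph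
whose support is exactly the set of leaves of `T`, every non-leaf of `T` has degree
at least three, and the cycle is compatible with a planar embedding: for every edge
`uv` of `T`, the leaves lying in each component of `T - uv` are consecutive on the
cycle, i.e. they induce a connected subgraph of the cycle. -/
structure HalinGraph (V : Type*) [Fintype V] : Type _ where
  /-- the characteristic tree -/
  T : SimpleGraph V
  /-- the outer cycle -/
  C : SimpleGraph V
  tree_isTree : T.IsTree
  four_le_card : 4 ≤ Fintype.card V
  nonleaf_degree : ∀ v : V, ¬ IsLeaf T v → 3 ≤ ncDeg T v
  support_C : C.support = {v : V | IsLeaf T v}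
  two_regular : ∀ v ∈ C.support, ncDeg C v = 2
  cycle_connected : (C.induce C.support).Connected
  planar : ∀ u v : V, T.Adj u v →
    (C.induce {x : V | IsLeaf T x ∧ (T.deleteEdges {s(u, v)}).Reachable u x}).Connected

/-- The Halin graph itself: the (edge-disjoint) union of the tree and the outer cycle. -/
def HalinGraph.graph {V : Type*} [Fintype V] (H : HalinGraph V) : SimpleGraph V :=
  H.T ⊔ H.C

/-- Number of edges of a graph. -/
noncomputable def eCount {V : Type*} (G : SimpleGraph V) : ℕ :=
  G.edgeSet.ncard

/-- A graph is `C₄`-free iff it contains no cycle of length `4`. -/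
def C4Free {V : Type*} (G : SimpleGraph V) : Prop :=
  ∀ (v : V) (w : G.Walk v v), w.IsCycle → w.length ≠ 4

/-- A semi-branching vertex of the characteristic tree: a non-leaf with at least one
leaf neighbour and at least two non-leaf neighbours. -/
def SemiBranching {V : Type*} (T : SimpleGraph V) (v : V) : Prop :=
  ¬ IsLeaf T v ∧ (∃ x, T.Adj v x ∧ IsLeaf T x) ∧
    ∃ x y : V, x ≠ y ∧ T.Adj v x ∧ T.Adj v y ∧ ¬ IsLeaf T x ∧ ¬ IsLeaf T y

/-!
Let `uv` be the middle edge of a path of length `5` in `T`; then `u` and `v` each carry an arm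
of length `2` pointing away from the other. A vertex on `u`'s side at distance at least `2`
from `u` ends a path of length at least `5` through `v`'s arm, so it is a leaf. Hence every
non-leaf `m ≠ u, v` is adjacent to `u` or to `v` and all its other neighbours are leaves.
Planarity makes the leaf children of `m` consecutive on the outer cycle, so three of them would
span a `4`-cycle through `m`: `m` has exactly two. Similarly, a leaf adjacent to `u` would give a
`4`-cycle through `u` where the leaves on `u`'s side stop being neighbours of `u`. With `k` such
vertices `m` there are `2k` leaves, `n = 3k + 2` and `e(H) = (n - 1) + 2k = 5k + 1`.
-/

section

variable {V : Type*} {G : SimpleGraph V} {u v w x y : V}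

theorem ncDeg_eq_degree (G : SimpleGraph V) (v : V) [Fintype (G.neighborSet v)] :
    ncDeg G v = G.degree v := by
  rw [ncDeg, Set.ncard_eq_toFinset_card']
  rfl

theorem eCount_eq_card_edgeFinset (G : SimpleGraph V) [Fintype G.edgeSet] :
    eCount G = G.edgeFinset.card := by
  rw [eCount, ← coe_edgeFinset, Set.ncard_coe_finset]

theorem IsLeaf.exists_adj (h : IsLeaf G v) : ∃ w, G.Adj v w := by
  obtain ⟨w, hw⟩ := Set.ncard_eq_one.mp h
  exact ⟨w, show w ∈ G.neighborSet v by simp [hw]⟩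

theorem IsLeaf.eq_of_adj (h : IsLeaf G v) (hx : G.Adj v x) (hy : G.Adj v y) : x = y := by
  obtain ⟨w, hw⟩ := Set.ncard_eq_one.mp h
  have hx' : x ∈ G.neighborSet v := hx
  have hy' : y ∈ G.neighborSet v := hy
  rw [hw] at hx' hy'
  exact hx'.trans hy'.symm

theorem IsLeaf.ne_of_not_isLeaf (hx : IsLeaf G x) (hy : ¬ IsLeaf G y) : x ≠ y :=
  fun h => hy (h ▸ hx)

theorem not_isLeaf_of_adj_of_adj (hx : G.Adj v x) (hy : G.Adj v y) (hxy : x ≠ y) :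
    ¬ IsLeaf G v :=
  fun h => hxy (h.eq_of_adj hx hy)

theorem SimpleGraph.Reachable.mem_of_adj_mem {S : Set V}
    (hS : ∀ a b, G.Adj a b → a ∈ S → b ∈ S) (h : G.Reachable u v) (hu : u ∈ S) : v ∈ S := by
  by_contra hv
  obtain ⟨p⟩ := h
  obtain ⟨d, -, hd, hd'⟩ := p.exists_boundary_dart S hu hv
  exact hd' (hS _ _ d.adj hd)

theorem SimpleGraph.Connected.not_adj_of_isLeaf [Fintype V] (hG : G.Connected)
    (hcard : 3 ≤ Fintype.card V) (hx : IsLeaf G x) (hy : IsLeaf G y) : ¬ G.Adj x y := by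
  classical
  intro hxy
  obtain ⟨w, -, hw⟩ := Finset.exists_mem_notMem_of_card_lt_card (s := {x, y})
    (t := Finset.univ) (by have := Finset.card_le_two (a := x) (b := y); simp; omega)
  have hS : ∀ a b, G.Adj a b → a ∈ ({x, y} : Set V) → b ∈ ({x, y} : Set V) := by
    rintro a b hab (rfl | rfl)
    · exact .inr (hx.eq_of_adj hab hxy)
    · exact .inl (hy.eq_of_adj hab hxy.symm)
  exact hw (by simpa using (hG.preconnected x w).mem_of_adj_mem hS (by simp))

theorem SimpleGraph.Connected.exists_adj_adj_of_ne (hG : G.Connected) {a b c : V}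
    (hab : a ≠ b) (hac : a ≠ c) (hbc : b ≠ c) : ∃ x y z, x ≠ z ∧ G.Adj x y ∧ G.Adj y z := by
  have key : ∀ w, a ≠ w → G.Adj a w ∨ ∃ y z, a ≠ z ∧ G.Adj a y ∧ G.Adj y z := by
    intro w hw
    obtain ⟨p, hp⟩ := (hG.preconnected a w).exists_isPath
    cases p with
    | nil => exact absurd rfl hw
    | cons h q =>
      cases q with
      | nil => exact .inl h
      | cons h' r =>
        refine .inr ⟨_, _, fun e => ?_, h, h'⟩
        subst e
        simp [Walk.cons_isPath_iff] at hp
  rcases key b hab with hb | h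
  · rcases key c hac with hc | ⟨y, z, h⟩
    · exact ⟨b, a, c, hbc, hb.symm, hc⟩
    · exact ⟨a, y, z, h⟩
  · obtain ⟨y, z, h⟩ := h
    exact ⟨a, y, z, h⟩

theorem SimpleGraph.Connected.exists_adj_mem_notMem_of_induce {S A : Set V}
    (h : (G.induce S).Connected) (hx : x ∈ S) (hxA : x ∈ A) (hy : y ∈ S) (hyA : y ∉ A) :
    ∃ a ∈ S, ∃ b ∈ S, a ∈ A ∧ b ∉ A ∧ G.Adj a b := by
  obtain ⟨p⟩ := h.preconnected ⟨x, hx⟩ ⟨y, hy⟩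
  obtain ⟨d, -, hdA, hdB⟩ := p.exists_boundary_dart {s | (s : V) ∈ A} hxA hyA
  exact ⟨d.fst, d.fst.2, d.snd, d.snd.2, hdA, hdB, d.adj⟩

theorem C4Free.eq_or_eq_of_adj (h : C4Free G) {a b c d : V} (hab : G.Adj a b)
    (hbc : G.Adj b c) (hcd : G.Adj c d) (hda : G.Adj d a) : a = c ∨ b = d := by
  by_contra! hne
  refine h d (.cons hda (.cons hab (.cons hbc (.cons hcd .nil)))) ?_ rfl
  rw [Walk.cons_isCycle_iff]
  have := hab.ne; have := hbc.ne; have := hcd.ne; have := hda.ne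
  simp_all [Walk.cons_isPath_iff, eq_comm]

theorem SimpleGraph.Adj.adj_deleteEdges_of_ne (h : G.Adj x y) (hu : x ≠ u) (hv : x ≠ v) :
    (G.deleteEdges {s(u, v)}).Adj x y := by
  simp [deleteEdges_adj, h, hu, hv]

theorem SimpleGraph.Connected.reachable_deleteEdges_or (hG : G.Connected) (u v w : V) :
    (G.deleteEdges {s(u, v)}).Reachable u w ∨ (G.deleteEdges {s(v, u)}).Reachable v w := by
  rw [Sym2.eq_swap (a := v)]
  refine (hG.preconnected u w).mem_of_adj_mem (S := {w | _ ∨ _}) ?_ (.inl .rfl)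
  intro a b hab ha
  by_cases he : s(a, b) = s(u, v)
  · rcases Sym2.eq_iff.mp he with ⟨-, rfl⟩ | ⟨-, rfl⟩
    exacts [.inr .rfl, .inl .rfl]
  · have hD : (G.deleteEdges {s(u, v)}).Adj a b := by simp [deleteEdges_adj, hab, he]
    exact ha.imp (·.trans hD.reachable) (·.trans hD.reachable)

theorem SimpleGraph.IsAcyclic.not_adj_of_adj_of_adj (hG : G.IsAcyclic) (hxy : G.Adj x y)
    (hyw : G.Adj y w) : ¬ G.Adj x w := by
  intro hxw
  have hp : (Walk.cons hxy (.cons hyw .nil)).IsPath := by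
    simp [Walk.cons_isPath_iff, hxy.ne, hyw.ne, hxw.ne]
  exact hyw.ne (hG.eq_snd_of_adj_start hp hxw (by simp)).symm

theorem SimpleGraph.IsAcyclic.exists_adj_notMem_support (hG : G.IsAcyclic) {p : G.Walk u v}
    (hp : p.IsPath) (hv : 1 < ncDeg G v) : ∃ x, G.Adj v x ∧ x ∉ p.support := by
  obtain ⟨x, hx, y, hy, hxy⟩ :=
    (Set.one_lt_ncard (Set.finite_of_ncard_pos (by unfold ncDeg at hv; omega))).mp hv
  by_contra! h
  exact hxy ((hG.eq_penultimate_of_adj_end hp hx (h x hx)).trans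
    (hG.eq_penultimate_of_adj_end hp hy (h y hy)).symm)

theorem SimpleGraph.IsAcyclic.isLeaf_of_le_length (hG : G.IsAcyclic)
    (hdeg : ∀ v, ¬ IsLeaf G v → 3 ≤ ncDeg G v) {k : ℕ}
    (hmax : ∀ (a b : V) (p : G.Walk a b), p.IsPath → p.length ≤ k)
    {p : G.Walk u v} (hp : p.IsPath) (hk : k ≤ p.length) : IsLeaf G v := by
  by_contra hv
  obtain ⟨x, hx, hxp⟩ := hG.exists_adj_notMem_support hp (by have := hdeg v hv; omega)
  have := hmax _ _ _ (hp.concat hxp hx)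
  simp only [Walk.length_concat] at this
  omega

def HasArm (G : SimpleGraph V) (v u : V) : Prop :=
  ∃ x y, G.Adj v x ∧ G.Adj x y ∧ x ≠ u ∧ y ≠ u ∧ y ≠ v

theorem HasArm.not_isLeaf (h : HasArm G v u) (hvu : G.Adj v u) : ¬ IsLeaf G v := by
  obtain ⟨x, -, hvx, -, hxu, -⟩ := h
  exact not_isLeaf_of_adj_of_adj hvu hvx hxu.symm

theorem SimpleGraph.Walk.IsPath.exists_hasArm_of_length_eq_five {a b : V} {p : G.Walk a b}
    (hp : p.IsPath) (hlen : p.length = 5) : ∃ u v, G.Adj u v ∧ HasArm G u v ∧ HasArm G v u := by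
  have hadj (i : ℕ) (hi : i < 5 := by decide) : G.Adj (p.getVert i) (p.getVert (i + 1)) :=
    p.adj_getVert_succ (by omega)
  have hne (i j : ℕ) (hij : i ≠ j := by decide) (hi : i ≤ 5 := by decide)
      (hj : j ≤ 5 := by decide) : p.getVert i ≠ p.getVert j :=
    fun h => hij (hp.getVert_injOn (by simp; omega) (by simp; omega) h)
  exact ⟨_, _, hadj 2, ⟨_, _, (hadj 1).symm, (hadj 0).symm, hne 1 3, hne 0 3, hne 0 2⟩,
    ⟨_, _, hadj 3, hadj 4, hne 4 2, hne 5 2, hne 5 3⟩⟩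

theorem SimpleGraph.IsAcyclic.ne_of_reachable_deleteEdges (hG : G.IsAcyclic) (huv : G.Adj u v)
    (hr : (G.deleteEdges {s(u, v)}).Reachable u w) : w ≠ v := by
  rintro rfl
  exact isBridge_iff.mp (isAcyclic_iff_forall_adj_isBridge.mp hG huv) hr

/-- The central edge `uv` of a path of length `5` in a tree all of whose paths have length at
most `5`, seen from `u`'s side. -/
structure ArmedEdge (G : SimpleGraph V) (u v : V) : Prop where
  isAcyclic : G.IsAcyclic
  nonleaf_degree : ∀ w, ¬ IsLeaf G w → 3 ≤ ncDeg G w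
  length_le : ∀ (a b : V) (p : G.Walk a b), p.IsPath → p.length ≤ 5
  adj : G.Adj u v
  hasArm : HasArm G v u

namespace ArmedEdge

variable {m : V}

theorem adj_of_reachable_deleteEdges (hc : ArmedEdge G u v) (hm : ¬ IsLeaf G m) (hmu : m ≠ u)
    (hr : (G.deleteEdges {s(u, v)}).Reachable u m) : G.Adj u m := by
  classical
  obtain ⟨x, y, hvx, hxy, hxu, hyu, hyv⟩ := hc.hasArm
  set D := G.deleteEdges {s(u, v)}
  have hxv : x ≠ v := hvx.ne'
  have hvx' : D.Reachable v x := (hvx.symm.adj_deleteEdges_of_ne hxu hxv).reachable.symm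
  have hvy : D.Reachable v y := hvx'.trans (hxy.adj_deleteEdges_of_ne hxu hxv).reachable
  obtain ⟨q, hq⟩ := hr.exists_isPath
  have hfar : ∀ w, D.Reachable v w → w ∉ q.support := fun w hvw hw =>
    hc.isAcyclic.ne_of_reachable_deleteEdges hc.adj
      ((q.takeUntil w hw).reachable.trans hvw.symm) rfl
  -- The arm `y – x – v` followed by the edge `vu` and `q` is a path ending at the non-leaf `m`.
  have hW : (Walk.cons hxy.symm (.cons hvx.symm (.cons hc.adj.symm
      (q.mapLe (deleteEdges_le _))))).IsPath := by
    simp only [Walk.cons_isPath_iff, Walk.isPath_mapLe, Walk.support_cons,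
      Walk.support_mapLe_eq_support, List.mem_cons, not_or]
    exact ⟨⟨⟨hq, hfar v .rfl⟩, hxv, hfar x hvx'⟩, hxy.ne', hyv, hfar y hvy⟩
  have hlen : q.length < 2 := by
    by_contra! h
    exact hm (hc.isAcyclic.isLeaf_of_le_length hc.nonleaf_degree hc.length_le hW
      (by simp; omega))
  interval_cases h : q.length
  · exact absurd (Walk.eq_of_length_eq_zero h).symm hmu
  · exact deleteEdges_le _ (Walk.adj_of_length_eq_one h)

theorem isLeaf_of_adj_of_reachable_deleteEdges (hc : ArmedEdge G u v) (hm : ¬ IsLeaf G m)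
    (hmu : m ≠ u) (hr : (G.deleteEdges {s(u, v)}).Reachable u m) (hmy : G.Adj m y)
    (hyu : y ≠ u) : IsLeaf G y := by
  have hmv := hc.isAcyclic.ne_of_reachable_deleteEdges hc.adj hr
  by_contra hy
  refine hc.isAcyclic.not_adj_of_adj_of_adj (hc.adj_of_reachable_deleteEdges hm hmu hr) hmy
    (hc.adj_of_reachable_deleteEdges hy hyu ?_)
  exact hr.trans (hmy.adj_deleteEdges_of_ne hmu hmv).reachable

theorem setOf_isLeaf_reachable_deleteEdges (hc : ArmedEdge G u v) (hm : ¬ IsLeaf G m)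
    (hmu : m ≠ u) (hr : (G.deleteEdges {s(u, v)}).Reachable u m) :
    {x | IsLeaf G x ∧ (G.deleteEdges {s(m, u)}).Reachable m x} =
      {y | G.Adj m y ∧ IsLeaf G y} := by
  have hchild (y : V) (hmy : G.Adj m y) (hyu : y ≠ u) : IsLeaf G y :=
    hc.isLeaf_of_adj_of_reachable_deleteEdges hm hmu hr hmy hyu
  have hu : ¬ IsLeaf G u := not_isLeaf_of_adj_of_adj hc.adj
    (hc.adj_of_reachable_deleteEdges hm hmu hr)
    (hc.isAcyclic.ne_of_reachable_deleteEdges hc.adj hr).symm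
  ext x
  constructor
  · rintro ⟨hx, hmx⟩
    have hS : ∀ a b, (G.deleteEdges {s(m, u)}).Adj a b →
        a ∈ {w | w = m ∨ G.Adj m w ∧ w ≠ u} → b ∈ {w | w = m ∨ G.Adj m w ∧ w ≠ u} := by
      rintro a b hab (rfl | ⟨hma, hau⟩)
      · simp only [deleteEdges_adj, Set.mem_singleton_iff, Sym2.eq, Sym2.rel_iff',
          Prod.mk.injEq, true_and] at hab
        exact .inr ⟨hab.1, fun h => hab.2 (.inl h)⟩
      · exact .inl ((hchild a hma hau).eq_of_adj (deleteEdges_le _ hab) hma.symm)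
    rcases hmx.mem_of_adj_mem hS (.inl rfl) with rfl | ⟨hmx', -⟩
    exacts [absurd hx hm, ⟨hmx', hx⟩]
  · rintro ⟨hmx, hx⟩
    exact ⟨hx, (hmx.symm.adj_deleteEdges_of_ne hmx.ne' (hx.ne_of_not_isLeaf hu)).reachable.symm⟩

end ArmedEdge

theorem ncard_setOf_isLeaf_eq_mul [Finite V] {M : Set V} {k : ℕ}
    (hleaf : ∀ x, IsLeaf G x → ∀ y, G.Adj x y → y ∈ M)
    (hM : ∀ m ∈ M, {y | G.Adj m y ∧ IsLeaf G y}.ncard = k) :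
    {x | IsLeaf G x}.ncard = M.ncard * k := by
  classical
  have := Fintype.ofFinite V
  have hcount := Finset.card_mul_eq_card_mul (s := {x | IsLeaf G x}.toFinset)
    (t := M.toFinset) (m := 1) (n := k) G.Adj ?_ ?_
  · simpa [Set.ncard_eq_toFinset_card'] using hcount
  · intro x hx
    simp only [Set.mem_toFinset, Set.mem_ofPred_eq] at hx
    obtain ⟨w, hw⟩ := Set.ncard_eq_one.mp hx
    rw [Finset.card_eq_one]
    refine ⟨w, Finset.ext fun y => ?_⟩
    have hy : G.Adj x y ↔ y = w := by rw [← mem_neighborSet, hw, Set.mem_singleton_iff]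
    simp only [Finset.bipartiteAbove, Finset.mem_filter, Set.mem_toFinset, Finset.mem_singleton,
      hy]
    exact ⟨And.right, fun h => ⟨hleaf x hx y (hy.mpr h), h⟩⟩
  · intro m hm
    rw [Set.mem_toFinset] at hm
    rw [← hM m hm, Set.ncard_eq_toFinset_card']
    congr 1
    ext y
    simp [Finset.bipartiteBelow, adj_comm, and_comm]

namespace HalinGraph

variable [Fintype V] (H : HalinGraph V)

theorem isLeaf_of_adj_C (h : H.C.Adj x y) : IsLeaf H.T x := by
  have hx : x ∈ H.C.support := ⟨y, h⟩
  rwa [H.support_C] at hx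

theorem not_adj_of_isLeaf (hx : IsLeaf H.T x) (hy : IsLeaf H.T y) : ¬ H.T.Adj x y :=
  H.tree_isTree.connected.not_adj_of_isLeaf (by linarith [H.four_le_card]) hx hy

theorem disjoint_edgeSet : Disjoint H.T.edgeSet H.C.edgeSet := by
  rw [Set.disjoint_left]
  rintro ⟨x, y⟩ hT hC
  exact H.not_adj_of_isLeaf (H.isLeaf_of_adj_C hC) (H.isLeaf_of_adj_C hC.symm) hT

theorem eCount_C : eCount H.C = {v | IsLeaf H.T v}.ncard := by
  classical
  have hdeg (v : V) : H.C.degree v = if IsLeaf H.T v then 2 else 0 := by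
    split_ifs with hv
    · rw [← ncDeg_eq_degree]
      exact H.two_regular v (H.support_C ▸ hv)
    · rw [degree_eq_zero_iff_notMem_support, H.support_C]
      exact hv
  have hsum := H.C.sum_degrees_eq_twice_card_edges
  simp only [hdeg, Finset.sum_ite, Finset.sum_const, smul_eq_mul, mul_zero, add_zero] at hsum
  rw [← eCount_eq_card_edgeFinset, ← Set.ncard_coe_finset, Finset.coe_filter_univ] at hsum
  omega

theorem eCount_graph : eCount H.graph + 1 = Fintype.card V + {v | IsLeaf H.T v}.ncard := by
  classical
  rw [HalinGraph.graph, eCount, edgeSet_sup, Set.ncard_union_eq H.disjoint_edgeSet, ← eCount,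
    ← eCount, eCount_C, eCount_eq_card_edgeFinset, ← H.tree_isTree.card_edgeFinset]
  ring

variable {H} {m : V}

theorem ncard_adj_isLeaf_eq_two (hfree : C4Free H.graph) (hc : ArmedEdge H.T u v)
    (hm : ¬ IsLeaf H.T m) (hmu : m ≠ u) (hr : (H.T.deleteEdges {s(u, v)}).Reachable u m) :
    {y | H.T.Adj m y ∧ IsLeaf H.T y}.ncard = 2 := by
  have hum := hc.adj_of_reachable_deleteEdges hm hmu hr
  apply le_antisymm
  · -- Three leaf children of `m` would contain a path `x – y – z` of the outer cycle.
    by_contra! h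
    obtain ⟨a, ha, b, hb, c, hc', hab, hac, hbc⟩ := (Set.two_lt_ncard (Set.toFinite _)).mp h
    have hconn := H.planar m u hum.symm
    rw [hc.setOf_isLeaf_reachable_deleteEdges hm hmu hr] at hconn
    obtain ⟨x, y, z, hxz, hxy, hyz⟩ := hconn.exists_adj_adj_of_ne (a := ⟨a, ha⟩)
      (b := ⟨b, hb⟩) (c := ⟨c, hc'⟩) (by simpa) (by simpa) (by simpa)
    rcases hfree.eq_or_eq_of_adj (Or.inl x.2.1) (Or.inr hxy) (Or.inr hyz) (Or.inl z.2.1.symm)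
      with h | h
    · exact y.2.1.ne h
    · exact hxz (Subtype.ext h)
  · calc 2 ≤ ncDeg H.T m - 1 := by have := H.nonleaf_degree m hm; omega
      _ = (H.T.neighborSet m \ {u}).ncard := by
        rw [ncDeg, Set.ncard_sdiff_singleton_of_mem (show u ∈ H.T.neighborSet m from hum.symm)]
      _ ≤ _ := Set.ncard_le_ncard fun y (⟨hmy, hyu⟩ : H.T.Adj m y ∧ y ≠ u) =>
        show H.T.Adj m y ∧ IsLeaf H.T y from
          ⟨hmy, hc.isLeaf_of_adj_of_reachable_deleteEdges hm hmu hr hmy hyu⟩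

theorem not_adj_isLeaf_of_armedEdge (hfree : C4Free H.graph) (hc : ArmedEdge H.T u v)
    (hu : HasArm H.T u v) (hx : IsLeaf H.T x) : ¬ H.T.Adj u x := by
  have hu' := hu.not_isLeaf hc.adj
  have hv' := hc.hasArm.not_isLeaf hc.adj.symm
  obtain ⟨a, b, hua, hab, hav, -, hbu⟩ := hu
  set D := H.T.deleteEdges {s(u, v)}
  have ha : ¬ IsLeaf H.T a := not_isLeaf_of_adj_of_adj hua.symm hab hbu.symm
  have hra : D.Reachable u a := (hua.symm.adj_deleteEdges_of_ne hua.ne' hav).reachable.symm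
  have hrb : D.Reachable u b := hra.trans (hab.adj_deleteEdges_of_ne hua.ne' hav).reachable
  have hb : IsLeaf H.T b := hc.isLeaf_of_adj_of_reachable_deleteEdges ha hua.ne' hra hab hbu
  intro hux
  have hrx : D.Reachable u x :=
    (hux.symm.adj_deleteEdges_of_ne hux.ne' (hx.ne_of_not_isLeaf hv')).reachable.symm
  -- Leaves on `u`'s side run on the outer cycle from the neighbour `x` of `u` to the
  -- non-neighbour `b`; a cycle edge `z z'` in between closes a `4`-cycle `u z z' m`.
  obtain ⟨z, hz, z', hz', huz, huz', hzz'⟩ :=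
    (H.planar u v hc.adj).exists_adj_mem_notMem_of_induce (A := {w | H.T.Adj u w})
      ⟨hx, hrx⟩ hux ⟨hb, hrb⟩ (hc.isAcyclic.not_adj_of_adj_of_adj hua hab)
  obtain ⟨m, hz'm⟩ := hz'.1.exists_adj
  have hm : ¬ IsLeaf H.T m := fun h => H.not_adj_of_isLeaf hz'.1 h hz'm
  have hrm : D.Reachable u m := hz'.2.trans (hz'm.adj_deleteEdges_of_ne
    (hz'.1.ne_of_not_isLeaf hu') (hz'.1.ne_of_not_isLeaf hv')).reachable
  have hum := hc.adj_of_reachable_deleteEdges hm (fun h => huz' (h ▸ hz'm.symm)) hrm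
  rcases hfree.eq_or_eq_of_adj (Or.inl huz) (Or.inr hzz') (Or.inl hz'm) (Or.inl hum.symm)
    with h | h
  · exact hu' (h ▸ hz'.1)
  · exact hm (h ▸ hz.1)

end HalinGraph

end

/-- If every longest path of the characteristic tree of an `n`-vertex `C₄`-free Halin
graph has length exactly `5`, then `3 ∣ n - 2` and the graph has `5(n-2)/3 + 1`
edges. -/
theorem longest_path_five {V : Type*} [Fintype V] (H : HalinGraph V)
    (hfree : C4Free H.graph)
    (hex : ∃ (a b : V) (p : H.T.Walk a b), p.IsPath ∧ p.length = 5)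
    (hmax : ∀ (a b : V) (p : H.T.Walk a b), p.IsPath → p.length ≤ 5) :
    3 ∣ (Fintype.card V - 2) ∧ eCount H.graph = 5 * (Fintype.card V - 2) / 3 + 1 := by
  obtain ⟨_, _, p, hp, hlen⟩ := hex
  obtain ⟨u, v, huv, hu, hv⟩ := hp.exists_hasArm_of_length_eq_five hlen
  have hcu : ArmedEdge H.T u v := ⟨H.tree_isTree.isAcyclic, H.nonleaf_degree, hmax, huv, hv⟩
  have hcv : ArmedEdge H.T v u := ⟨H.tree_isTree.isAcyclic, H.nonleaf_degree, hmax, huv.symm, hu⟩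
  set M := {m | ¬ IsLeaf H.T m} \ {u, v}
  have hleaf : ∀ x, IsLeaf H.T x → ∀ y, H.T.Adj x y → y ∈ M := by
    refine fun x hx y hxy => ⟨fun hy => H.not_adj_of_isLeaf hx hy hxy, ?_⟩
    rintro (rfl | rfl)
    exacts [H.not_adj_isLeaf_of_armedEdge hfree hcu hu hx hxy.symm,
      H.not_adj_isLeaf_of_armedEdge hfree hcv hv hx hxy.symm]
  have hM : ∀ m ∈ M, {y | H.T.Adj m y ∧ IsLeaf H.T y}.ncard = 2 := by
    rintro m ⟨hm, hmuv⟩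
    simp only [Set.mem_insert_iff, Set.mem_singleton_iff, not_or] at hmuv
    rcases H.tree_isTree.connected.reachable_deleteEdges_or u v m with hr | hr
    · exact H.ncard_adj_isLeaf_eq_two hfree hcu hm hmuv.1 hr
    · exact H.ncard_adj_isLeaf_eq_two hfree hcv hm hmuv.2 hr
  have hL := ncard_setOf_isLeaf_eq_mul hleaf hM
  have hN : M.ncard + 2 = {m | ¬ IsLeaf H.T m}.ncard := by
    rw [← Set.ncard_pair huv.ne]
    refine Set.ncard_sdiff_add_ncard_of_subset ?_
    rintro _ (rfl | rfl)
    exacts [hu.not_isLeaf huv, hv.not_isLeaf huv.symm]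
  have hn : {x | IsLeaf H.T x}.ncard + {x | ¬ IsLeaf H.T x}.ncard = Fintype.card V := by
    rw [← Set.compl_ofPred, Set.ncard_add_ncard_compl, Nat.card_eq_fintype_card]
  have hE := H.eCount_graph
  refine ⟨⟨M.ncard, by omega⟩, by omega⟩
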